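/- arXiv:2003.14070 — 3 statements merged into one kernel-verified Lean document; each statement's English description precedes it below -/
import Mathlib

section
/- For every even positive integer n, the sum over even divisors d of n of μ(n/d)·(n/d)·φ(d) equals −μ(n). -/
/-!
Since `id` is completely multiplicative, `μ · id` is its Dirichlet inverse; together with
`φ = μ ∗ id` this makes the sum over *all* divisors, `(μ · id) ∗ φ`, equal to `μ`.
The even divisors of `2m` are the `2e` with `e ∣ m`, and `φ (2e)` is `φ e` or `2 φ e` according
as `e` is odd or even, so the even-divisor sum at `2m` is `μ m` plus the even-divisor sum at `m`.
Induction on `n` closes the recursion: it stops at odd `m` (no even divisors, `μ (2m) = -μ m`),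
and for even `m` both sides at `2m` vanish.
-/

open Finset ArithmeticFunction
open scoped ArithmeticFunction.Moebius ArithmeticFunction.zeta

namespace ArithmeticFunction

def totient : ArithmeticFunction ℕ := ⟨Nat.totient, Nat.totient_zero⟩

theorem totient_mul_zeta : totient * ζ = ArithmeticFunction.id := by
  ext n
  rw [mul_zeta_apply, id_apply]
  exact Nat.sum_totient n

theorem pmul_id_mul_pmul_id {R : Type*} [CommSemiring R] (f g : ArithmeticFunction R) :
    f.pmul ArithmeticFunction.id * g.pmul ArithmeticFunction.id
      = (f * g).pmul ArithmeticFunction.id := by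
  ext n
  simp only [mul_apply, pmul_apply, natCoe_apply, id_apply, sum_mul]
  refine sum_congr rfl fun x hx => ?_
  rw [← (Nat.mem_divisorsAntidiagonal.mp hx).1, Nat.cast_mul]
  ring

theorem moebius_pmul_id_mul_id :
    (μ : ArithmeticFunction ℤ).pmul ArithmeticFunction.id * ArithmeticFunction.id = 1 := by
  have h := pmul_id_mul_pmul_id (μ : ArithmeticFunction ℤ) ζ
  rw [zeta_pmul, moebius_mul_coe_zeta] at h
  rw [h]
  ext n
  by_cases hn : n = 1 <;> simp [hn]

theorem moebius_pmul_id_mul_totient :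
    (μ : ArithmeticFunction ℤ).pmul ArithmeticFunction.id * totient = μ := by
  calc (μ : ArithmeticFunction ℤ).pmul ArithmeticFunction.id * totient
      = (μ : ArithmeticFunction ℤ).pmul ArithmeticFunction.id * ↑(totient * ζ) * μ := by
        rw [natCoe_mul, mul_assoc, mul_assoc, coe_zeta_mul_moebius, mul_one]
    _ = μ := by rw [totient_mul_zeta, moebius_pmul_id_mul_id, one_mul]

theorem moebius_two_mul_of_odd {m : ℕ} (hm : Odd m) : μ (2 * m) = -μ m := by
  rw [isMultiplicative_moebius.map_mul_of_coprime (Nat.coprime_two_left.mpr hm),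
    moebius_apply_prime Nat.prime_two, neg_one_mul]

theorem moebius_two_mul_of_even {m : ℕ} (hm : Even m) : μ (2 * m) = 0 := by
  obtain ⟨k, rfl⟩ := hm
  refine moebius_eq_zero_of_not_squarefree fun h => ?_
  have two_isUnit := h 2 ⟨k, by ring⟩
  norm_num at two_isUnit

end ArithmeticFunction

theorem Nat.sum_divisors_moebius_mul_self_mul_totient (n : ℕ) :
    ∑ d ∈ n.divisors, μ (n / d) * ((n / d : ℕ) : ℤ) * (d.totient : ℤ) = μ n := by
  conv_rhs => rw [← moebius_pmul_id_mul_totient, mul_apply,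
    ← Nat.map_div_left_divisors, sum_map]
  rfl

theorem Nat.filter_even_divisors_two_mul (m : ℕ) :
    {d ∈ (2 * m).divisors | Even d}
      = m.divisors.map ⟨(2 * ·), mul_right_injective₀ two_ne_zero⟩ := by
  ext d
  simp only [mem_filter, mem_map, Nat.mem_divisors, Function.Embedding.coeFn_mk]
  constructor
  · rintro ⟨⟨hd, hm⟩, e, rfl⟩
    rw [← two_mul] at hd ⊢
    exact ⟨e, ⟨Nat.dvd_of_mul_dvd_mul_left two_pos hd, by omega⟩, rfl⟩
  · rintro ⟨e, ⟨he, hm⟩, rfl⟩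
    exact ⟨⟨mul_dvd_mul_left 2 he, by omega⟩, even_two_mul e⟩

theorem Nat.filter_even_divisors_eq_empty_of_odd {m : ℕ} (hm : Odd m) :
    {d ∈ m.divisors | Even d} = ∅ :=
  filter_false_of_mem fun _ hd =>
    Nat.not_even_iff_odd.mpr (hm.of_dvd_nat (Nat.dvd_of_mem_divisors hd))

theorem Nat.sum_filter_even_divisors_two_mul {R : Type*} [NonAssocSemiring R] (F : ℕ → R)
    (m : ℕ) :
    ∑ d ∈ (2 * m).divisors with Even d, F (2 * m / d) * (d.totient : R)
      = ∑ d ∈ m.divisors, F (m / d) * (d.totient : R)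
        + ∑ d ∈ m.divisors with Even d, F (m / d) * (d.totient : R) := by
  rw [Nat.filter_even_divisors_two_mul, sum_map, sum_filter, ← sum_add_distrib]
  refine sum_congr rfl fun e _ => ?_
  simp only [Function.Embedding.coeFn_mk, Nat.mul_div_mul_left m e two_pos]
  rcases Nat.even_or_odd e with he | he
  · rw [Nat.totient_two_mul_of_even he, if_pos he, Nat.cast_mul, Nat.cast_two, two_mul, mul_add]
  · rw [Nat.totient_two_mul_of_odd he, if_neg (Nat.not_even_iff_odd.mpr he), add_zero]

theorem moebius_totient_convolution_even_divisors_general (n : ℕ) (hne : Even n) :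
    ∑ d ∈ n.divisors.filter (fun d => Even d),
        (ArithmeticFunction.moebius (n / d)) * ((n / d : ℕ) : ℤ) * (Nat.totient d : ℤ)
      = -ArithmeticFunction.moebius n := by
  induction n using Nat.strong_induction_on with
  | _ n ih =>
  obtain ⟨m, rfl⟩ := hne
  rw [← two_mul, Nat.sum_filter_even_divisors_two_mul (fun k => μ k * (k : ℤ)),
    Nat.sum_divisors_moebius_mul_self_mul_totient]
  rcases Nat.even_or_odd m with hm | hm
  · rcases m.eq_zero_or_pos with rfl | hm₀
    · simp
    rw [ih m (by omega) hm, moebius_two_mul_of_even hm, add_neg_cancel, neg_zero]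
  · rw [Nat.filter_even_divisors_eq_empty_of_odd hm, sum_empty, add_zero,
      moebius_two_mul_of_odd hm, neg_neg]

theorem moebius_totient_convolution_even_divisors (n : ℕ) (hn : 0 < n) (hne : Even n) :
    ∑ d ∈ n.divisors.filter (fun d => Even d),
        (ArithmeticFunction.moebius (n / d)) * ((n / d : ℕ) : ℤ) * (Nat.totient d : ℤ)
      = -ArithmeticFunction.moebius n :=
  moebius_totient_convolution_even_divisors_general n hne
end

section
/- The number of orbits under simultaneous cyclic rotation and the symbol permutation swapping 0↔1 and fixing a (the group C_n^Π) acting on words of length n over the alphabet {0, a, 1} equals (1/(2n))·[Σ_{d|n, d odd} φ(d)·(1 + 3^{n/d}) + 2·Σ_{d|n, d even} φ(d)·3^{n/d}]. -/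
/-!
Burnside's lemma for the group `A × ZMod 2` acting on words `A → X`, where `(l, ε)` rotates by `l`
and applies the letter involution `σ` (here `π`) `ε` times. The words fixed by `(l, ε)` satisfy
`σ^ε (w (i + l)) = w i`; such a word is free on representatives of the cosets of `⟨l⟩`, its values
there being exactly the points of period `d = ord l` of `σ^ε`. This gives `|X|^(n/d)` fixed words
for `ε = 0`, and for `ε = 1` the same when `d` is even but `|Fix σ|^(n/d)` when `d` is odd
(`Fix π = {a}`; the letters `0, a, 1` are `0, 1, 2 : Fin 3` and `π x = 2 - x`). In a cyclic group
exactly `φ d` elements have order `d`.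
-/

open Finset

open Function

namespace Function

variable {X : Type*} {f : X → X}

theorem IsPeriodicPt.iterate_eq_of_modEq {n a b : ℕ} {x : X} (hx : IsPeriodicPt f n x)
    (hab : a ≡ b [MOD n]) : f^[a] x = f^[b] x := by
  rw [← hx.iterate_mod_apply, hab, hx.iterate_mod_apply]

theorem Involutive.iterate_val_add (hf : Involutive f) (a b : ZMod 2) :
    f^[(a + b).val] = f^[a.val] ∘ f^[b.val] := by
  funext x
  have hx : IsPeriodicPt f 2 x := hf x
  rw [ZMod.val_add, hx.iterate_mod_apply, iterate_add_apply]
  rfl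

theorem Involutive.isPeriodicPt_iff (hf : Involutive f) {d : ℕ} {x : X} :
    IsPeriodicPt f d x ↔ Even d ∨ IsFixedPt f x := by
  have h2 : IsPeriodicPt f 2 x := hf x
  constructor
  · intro hd
    refine (Nat.even_or_odd d).imp id fun hodd => ?_
    have h1 := hd.gcd h2
    rwa [Nat.Coprime.gcd_eq_one (Nat.coprime_two_right.2 hodd), IsPeriodicPt, iterate_one] at h1
  · rintro (⟨k, rfl⟩ | hx)
    · simpa [two_mul] using h2.mul_const k
    · exact hx.isPeriodicPt d

theorem Involutive.card_isPeriodicPt (hf : Involutive f) (d : ℕ) :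
    Nat.card {x // IsPeriodicPt f d x} =
      if Even d then Nat.card X else Nat.card {x // IsFixedPt f x} := by
  simp_rw [hf.isPeriodicPt_iff]
  split_ifs with hd <;> simp [hd]

end Function

section TwistedPeriodic

variable {A X : Type*} [AddGroup A] (f : X → X) (l : A)

theorem iterate_apply_add_nsmul {w : A → X} (hw : ∀ i, f (w (i + l)) = w i) (k : ℕ) (i : A) :
    f^[k] (w (i + k • l)) = w i := by
  induction k generalizing i with
  | zero => simp
  | succ k ih => rw [iterate_succ_apply, succ_nsmul, ← add_assoc, hw, ih]

variable [Finite A]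

theorem exists_add_nsmul_eq_out (i : A) :
    ∃ k : ℕ, i + k • l = (i : A ⧸ AddSubgroup.zmultiples l).out := by
  obtain ⟨⟨h, hh⟩, he⟩ := QuotientAddGroup.mk_out_eq_add (AddSubgroup.zmultiples l) i
  obtain ⟨k, rfl⟩ :=
    (AddSubmonoid.mem_multiples_iff _ _).1 (mem_multiples_iff_mem_zmultiples.2 hh)
  exact ⟨k, he.symm⟩

noncomputable def stepsToOut (i : A) : ℕ := (exists_add_nsmul_eq_out l i).choose

theorem add_stepsToOut_nsmul (i : A) :
    i + stepsToOut l i • l = (i : A ⧸ AddSubgroup.zmultiples l).out :=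
  (exists_add_nsmul_eq_out l i).choose_spec

theorem stepsToOut_add_modEq (i : A) :
    stepsToOut l (i + l) + 1 ≡ stepsToOut l i [MOD addOrderOf l] := by
  have h := add_stepsToOut_nsmul l (i + l)
  rw [QuotientAddGroup.mk_add_of_mem i (AddSubgroup.mem_zmultiples l),
    ← add_stepsToOut_nsmul l i, add_assoc, ← succ_nsmul'] at h
  exact nsmul_eq_nsmul_iff_modEq.1 (add_left_cancel h)

theorem addOrderOf_dvd_stepsToOut_out (q : A ⧸ AddSubgroup.zmultiples l) :
    addOrderOf l ∣ stepsToOut l q.out := by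
  have h := add_stepsToOut_nsmul l q.out
  rw [QuotientAddGroup.out_eq', add_eq_left] at h
  exact addOrderOf_dvd_of_nsmul_eq_zero h

/-- Along a coset of `⟨l⟩` a solution is determined by its value at the representative, which
must be fixed by `f^[addOrderOf l]` because walking once around the coset applies it. -/
noncomputable def twistedPeriodicEquiv :
    {w : A → X // ∀ i, f (w (i + l)) = w i} ≃
      (A ⧸ AddSubgroup.zmultiples l → {y // IsPeriodicPt f (addOrderOf l) y}) where
  toFun w q := ⟨w.1 q.out, by
    have h := iterate_apply_add_nsmul f l w.2 (addOrderOf l) q.out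
    rwa [addOrderOf_nsmul_eq_zero, add_zero] at h⟩
  invFun v := ⟨fun i => f^[stepsToOut l i] (v i), fun i => by
    simp only
    rw [QuotientAddGroup.mk_add_of_mem i (AddSubgroup.mem_zmultiples l), ← iterate_succ_apply' f]
    exact (v i).2.iterate_eq_of_modEq (stepsToOut_add_modEq l i)⟩
  left_inv w := Subtype.ext <| funext fun i => by
    simp only
    rw [← add_stepsToOut_nsmul, iterate_apply_add_nsmul f l w.2]
  right_inv v := funext fun q => Subtype.ext <| by
    simp only [QuotientAddGroup.out_eq']
    exact (v q).2.iterate_eq_of_modEq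
      (Nat.modEq_zero_iff_dvd.2 (addOrderOf_dvd_stepsToOut_out l q))

theorem card_twistedPeriodic :
    Nat.card {w : A → X // ∀ i, f (w (i + l)) = w i} =
      Nat.card {y // IsPeriodicPt f (addOrderOf l) y} ^ (Nat.card A / addOrderOf l) := by
  rw [Nat.card_congr (twistedPeriodicEquiv f l), Nat.card_fun, ← AddSubgroup.index,
    ← (AddSubgroup.zmultiples l).index_mul_card, Nat.card_zmultiples,
    Nat.mul_div_cancel _ (addOrderOf_pos l)]

end TwistedPeriodic

theorem IsAddCyclic.sum_addOrderOf {A M : Type*} [AddGroup A] [Fintype A] [IsAddCyclic A]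
    [AddCommMonoid M] (F : ℕ → M) :
    ∑ a : A, F (addOrderOf a) = ∑ d ∈ (Fintype.card A).divisors, d.totient • F d := by
  rw [← Finset.sum_fiberwise_of_maps_to (g := addOrderOf) (t := (Fintype.card A).divisors)
    fun a _ => Nat.mem_divisors.2 ⟨addOrderOf_dvd_card, Fintype.card_ne_zero⟩]
  refine Finset.sum_congr rfl fun d hd => ?_
  rw [Finset.sum_congr rfl fun a ha => by rw [(Finset.mem_filter.1 ha).2], Finset.sum_const,
    IsAddCyclic.card_addOrderOf_eq_totient (Nat.dvd_of_mem_divisors hd)]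

namespace ShiftFlip

variable {A X : Type*} [AddGroup A] {σ : X → X}

def act (σ : X → X) (p : A × ZMod 2) (w : A → X) : A → X :=
  fun i => σ^[p.2.val] (w (i + p.1))

theorem act_zero (w : A → X) : act σ 0 w = w := by
  funext i
  simp [act]

theorem act_add (hσ : Involutive σ) (p q : A × ZMod 2) (w : A → X) :
    act σ (p + q) w = act σ p (act σ q w) := by
  funext i
  simp [act, hσ.iterate_val_add, add_assoc]

abbrev mulAction (hσ : Involutive σ) : MulAction (Multiplicative (A × ZMod 2)) (A → X) where
  smul g w := act σ g.toAdd w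
  one_smul := act_zero
  mul_smul g h := act_add hσ g.toAdd h.toAdd

theorem orbitRel_iff (hσ : Involutive σ) (w₁ w₂ : A → X) :
    letI := mulAction (A := A) hσ
    MulAction.orbitRel (Multiplicative (A × ZMod 2)) (A → X) w₁ w₂ ↔
      ∃ l : A, w₁ = (fun i => w₂ (i + l)) ∨ w₁ = fun i => σ (w₂ (i + l)) := by
  let _ := mulAction (A := A) hσ
  rw [MulAction.orbitRel_apply, MulAction.mem_orbit_iff]
  constructor
  · rintro ⟨g, rfl⟩
    refine ⟨g.toAdd.1, ?_⟩
    rcases (by decide : ∀ ε : ZMod 2, ε = 0 ∨ ε = 1) g.toAdd.2 with h | h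
    · exact .inl <| funext fun i => by simp [HSMul.hSMul, SMul.smul, act, h]
    · exact .inr <| funext fun i => by simp [HSMul.hSMul, SMul.smul, act, h]; rfl
  · rintro ⟨l, rfl | rfl⟩
    · exact ⟨Multiplicative.ofAdd (l, 0), rfl⟩
    · exact ⟨Multiplicative.ofAdd (l, 1), rfl⟩

variable [Fintype A]

theorem card_fixedBy (hσ : Involutive σ) (p : A × ZMod 2) :
    letI := mulAction (A := A) hσ
    Nat.card (MulAction.fixedBy (A → X) (Multiplicative.ofAdd p)) =
      Nat.card {x // IsPeriodicPt σ^[p.2.val] (addOrderOf p.1) x} ^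
        (Nat.card A / addOrderOf p.1) := by
  rw [← card_twistedPeriodic]
  exact Nat.card_congr (Equiv.subtypeEquivRight fun w => funext_iff)

theorem card_orbits_mul_card_group [Finite X] (hσ : Involutive σ) :
    letI := mulAction (A := A) hσ
    Nat.card (MulAction.orbitRel.Quotient (Multiplicative (A × ZMod 2)) (A → X)) *
        (2 * Nat.card A) =
      ∑ l : A, (Nat.card X ^ (Nat.card A / addOrderOf l) +
        (if Even (addOrderOf l) then Nat.card X else Nat.card {x // IsFixedPt σ x}) ^
          (Nat.card A / addOrderOf l)) := by
  let _ := mulAction (A := A) hσ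
  let _ : ∀ g : Multiplicative (A × ZMod 2), Fintype (MulAction.fixedBy (A → X) g) :=
    fun _ => Fintype.ofFinite _
  let _ := Fintype.ofFinite (MulAction.orbitRel.Quotient (Multiplicative (A × ZMod 2)) (A → X))
  have hG : 2 * Nat.card A = Fintype.card (Multiplicative (A × ZMod 2)) := by
    simp [Nat.card_eq_fintype_card, mul_comm]
  rw [hG, Nat.card_eq_fintype_card, ← MulAction.sum_card_fixedBy_eq_card_orbits_mul_card_group
    (Multiplicative (A × ZMod 2)) (A → X), ← Equiv.sum_comp Multiplicative.ofAdd,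
    Fintype.sum_prod_type]
  refine Finset.sum_congr rfl fun l _ => ?_
  simp only [← Nat.card_eq_fintype_card, card_fixedBy]
  refine (Fin.sum_univ_two _).trans ?_
  change Nat.card {x // IsPeriodicPt id (addOrderOf l) x} ^ _ +
    Nat.card {x // IsPeriodicPt σ (addOrderOf l) x} ^ _ = _
  simp [hσ.card_isPeriodicPt, is_periodic_id]

theorem two_mul_card_mul_card_quot [IsAddCyclic A] [Finite X] (hσ : Involutive σ) :
    2 * Nat.card A * Nat.card (Quot fun w₁ w₂ : A → X =>
        ∃ l : A, w₁ = (fun i => w₂ (i + l)) ∨ w₁ = fun i => σ (w₂ (i + l))) =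
      ∑ d ∈ (Nat.card A).divisors.filter Odd,
          d.totient * (Nat.card {x // IsFixedPt σ x} ^ (Nat.card A / d) +
            Nat.card X ^ (Nat.card A / d)) +
        2 * ∑ d ∈ (Nat.card A).divisors.filter Even, d.totient * Nat.card X ^ (Nat.card A / d) := by
  let _ := mulAction (A := A) hσ
  have hq : Nat.card (Quot fun w₁ w₂ : A → X =>
      ∃ l : A, w₁ = (fun i => w₂ (i + l)) ∨ w₁ = fun i => σ (w₂ (i + l))) =
      Nat.card (MulAction.orbitRel.Quotient (Multiplicative (A × ZMod 2)) (A → X)) :=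
    Nat.card_congr (Quot.congrRight fun w₁ w₂ => (orbitRel_iff hσ w₁ w₂).symm)
  rw [hq, mul_comm, card_orbits_mul_card_group hσ, Nat.card_eq_fintype_card (α := A),
    IsAddCyclic.sum_addOrderOf (fun d => Nat.card X ^ (Fintype.card A / d) +
      (if Even d then Nat.card X else Nat.card {x // IsFixedPt σ x}) ^ (Fintype.card A / d)),
    ← sum_filter_add_sum_filter_not _ Even, add_comm, mul_sum]
  simp only [Nat.not_even_iff_odd, smul_eq_mul]
  congr 1
  · refine sum_congr rfl fun d hd => ?_
    rw [if_neg (Nat.not_even_iff_odd.2 (mem_filter.1 hd).2)]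
    ring
  · refine sum_congr rfl fun d hd => ?_
    rw [if_pos (mem_filter.1 hd).2]
    ring

end ShiftFlip

theorem permuted_necklace_count_ternary_general (n : ℕ) :
    2 * n * Nat.card (Quot (fun w₁ w₂ : Fin n → Fin 3 =>
        ∃ l : Fin n, w₁ = (fun i => w₂ (i + l)) ∨ w₁ = fun i => 2 - w₂ (i + l)))
      = ∑ d ∈ n.divisors.filter (fun d => Odd d), Nat.totient d * (1 + 3 ^ (n / d)) +
        2 * ∑ d ∈ n.divisors.filter (fun d => Even d), Nat.totient d * 3 ^ (n / d) := by
  rcases Nat.eq_zero_or_pos n with rfl | hn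
  · simp
  have : NeZero n := ⟨hn.ne'⟩
  have : IsAddCyclic (Fin n) := (ZMod.finEquiv n).toAddEquiv.isAddCyclic.2 inferInstance
  have hfix : Nat.card {x : Fin 3 // IsFixedPt (fun x => 2 - x) x} = 1 := by
    rw [Nat.card_eq_fintype_card]
    rfl
  have key := ShiftFlip.two_mul_card_mul_card_quot (A := Fin n) (X := Fin 3)
    (σ := fun x => 2 - x) (by unfold Involutive; decide)
  rw [hfix] at key
  simpa using key

theorem permuted_necklace_count_ternary (n : ℕ) (hn : 0 < n) :
    2 * n * Nat.card (Quot (fun w₁ w₂ : Fin n → Fin 3 =>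
        ∃ l : Fin n, w₁ = (fun i => w₂ (i + l)) ∨ w₁ = fun i => 2 - w₂ (i + l)))
      = ∑ d ∈ n.divisors.filter (fun d => Odd d), Nat.totient d * (1 + 3 ^ (n / d)) +
        2 * ∑ d ∈ n.divisors.filter (fun d => Even d), Nat.totient d * 3 ^ (n / d) :=
  permuted_necklace_count_ternary_general n
end

section
/- Let π be the symbol permutation on words of length n over {0, a, 1} that fixes a and swaps 0↔1, composed with rotation by l. If n/gcd(n,l) is odd then the only word fixed by πr^l is the constant word aa…a; if n/gcd(n,l) is even then exactly 3^{gcd(n,l)} words are fixed. -/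
/-!
Letters `0, a, 1` are encoded as `0, 1, 2 : Fin 3`, so that `π` is the permutation `x ↦ 2 - x`.

A word fixed by `π r^l` satisfies `w i = π^k (w (i + k l))` for every integer `k`, so it is
determined by its values on representatives of the cosets of `⟨l⟩`, of which there are
`gcd(n, l)`, each of size `m = n / gcd(n, l)`. Going once around a coset imposes
`π^m x = x` on the value `x` at its representative: for odd `m` this forces `x = a`, for even
`m` it is no constraint, and the representatives' values can be chosen freely.
-/

open AddSubgroup

def fixedWords {G α : Type*} [AddGroup G] (σ : Equiv.Perm α) (g : G) : Set (G → α) :=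
  {w | ∀ i, w i = σ (w (i + g))}

theorem zpow_eq_zpow_of_zsmul_eq {G H : Type*} [AddGroup G] [Group H] {g : G} {x : H}
    (h : orderOf x ∣ addOrderOf g) {a b : ℤ} (hab : a • g = b • g) : x ^ a = x ^ b := by
  have hg : (addOrderOf g : ℤ) ∣ a - b := by
    rw [addOrderOf_dvd_iff_zsmul_eq_zero, sub_zsmul, hab, add_neg_cancel]
  rw [← mul_inv_eq_one, ← zpow_sub]
  exact orderOf_dvd_iff_zpow_eq_one.mp ((Int.natCast_dvd_natCast.mpr h).trans hg)

namespace QuotientAddGroup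

variable {G : Type*} [AddGroup G]

theorem exists_add_zsmul_eq_out (g i : G) :
    ∃ k : ℤ, i + k • g = (i : G ⧸ zmultiples g).out := by
  obtain ⟨k, hk⟩ := mem_zmultiples_iff.mp (QuotientAddGroup.eq.mp (out_eq' (i : G ⧸ zmultiples g)).symm)
  exact ⟨k, by rw [hk, add_neg_cancel_left]⟩

noncomputable def zmultiplesOffset (g i : G) : ℤ :=
  (exists_add_zsmul_eq_out g i).choose

theorem add_zmultiplesOffset_zsmul (g i : G) :
    i + zmultiplesOffset g i • g = (i : G ⧸ zmultiples g).out :=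
  (exists_add_zsmul_eq_out g i).choose_spec

end QuotientAddGroup

namespace fixedWords

open QuotientAddGroup

variable {G α : Type*} [AddGroup G] {σ : Equiv.Perm α} {g : G} {w : G → α}

theorem apply_eq_zpow_apply_add_zsmul (hw : w ∈ fixedWords σ g) (k : ℤ) (i : G) :
    w i = (σ ^ k) (w (i + k • g)) := by
  induction k using Int.induction_on with
  | zero => simp
  | succ k ih =>
    rw [ih, hw (i + (k : ℤ) • g), add_zsmul, one_zsmul, add_assoc, zpow_add_one,
      Equiv.Perm.mul_apply]
  | pred k ih =>
    rw [ih, hw (i + (-k - 1 : ℤ) • g), add_assoc, ← add_one_zsmul, ← Equiv.Perm.mul_apply,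
      ← zpow_add_one, sub_add_cancel]

theorem apply_eq_pow_addOrderOf_apply (hw : w ∈ fixedWords σ g) (i : G) :
    w i = (σ ^ addOrderOf g) (w i) := by
  simpa using apply_eq_zpow_apply_add_zsmul hw (addOrderOf g) i

/-- The inverse places `σ ^ k (f q)` at the point `k • g` before the chosen representative of
`q`; this is well defined exactly because `σ ^ addOrderOf g = 1`. -/
noncomputable def equivQuotientZMultiples (h : orderOf σ ∣ addOrderOf g) :
    fixedWords σ g ≃ (G ⧸ zmultiples g → α) where
  toFun w q := w.1 q.out
  invFun f := ⟨fun i => (σ ^ zmultiplesOffset g i) (f i), fun i => by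
    have hstep : zmultiplesOffset g i • g = (1 + zmultiplesOffset g (i + g)) • g := by
      have hout := (add_zmultiplesOffset_zsmul g i).trans <| by
        rw [← mk_add_of_mem i (mem_zmultiples g), ← add_zmultiplesOffset_zsmul, add_assoc]
      rw [add_zsmul, one_zsmul]
      exact add_left_cancel hout
    dsimp only
    rw [zpow_eq_zpow_of_zsmul_eq h hstep, zpow_one_add, Equiv.Perm.mul_apply,
      mk_add_of_mem i (mem_zmultiples g)]⟩
  left_inv w := by
    ext i
    dsimp only
    rw [apply_eq_zpow_apply_add_zsmul w.2 (zmultiplesOffset g i) i, add_zmultiplesOffset_zsmul]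
  right_inv f := by
    funext q
    have hzero : zmultiplesOffset g q.out • g = (0 : ℤ) • g := by
      have hout := add_zmultiplesOffset_zsmul g q.out
      rw [out_eq'] at hout
      rw [zero_zsmul]
      exact add_eq_left.mp hout
    dsimp only
    rw [zpow_eq_zpow_of_zsmul_eq h hzero, zpow_zero, out_eq', Equiv.Perm.one_apply]

end fixedWords

theorem card_fixedWords {G α : Type*} [AddGroup G] [Finite G] {σ : Equiv.Perm α} {g : G}
    (h : orderOf σ ∣ addOrderOf g) :
    Nat.card (fixedWords σ g) = Nat.card α ^ (zmultiples g).index := by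
  rw [Nat.card_congr (fixedWords.equivQuotientZMultiples h), Nat.card_fun]
  rfl

theorem Fin.addOrderOf_eq_div_gcd {n : ℕ} [NeZero n] (l : Fin n) :
    addOrderOf l = n / n.gcd l.val := by
  obtain ⟨k, rfl⟩ := Nat.exists_eq_succ_of_ne_zero (NeZero.ne n)
  have h := ZMod.addOrderOf_coe l.val k.succ_ne_zero
  rwa [show ((l.val : ℕ) : ZMod (k + 1)) = l from ZMod.natCast_zmod_val (n := k + 1) l] at h

theorem Fin.index_zmultiples {n : ℕ} [NeZero n] (l : Fin n) :
    (zmultiples l).index = n.gcd l.val := by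
  have h := (zmultiples l).card_mul_index
  have hpos := addOrderOf_pos l
  rw [Nat.card_zmultiples, Fin.addOrderOf_eq_div_gcd, Nat.card_fin] at h
  rw [Fin.addOrderOf_eq_div_gcd] at hpos
  exact Nat.eq_of_mul_eq_mul_left hpos (h.trans (Nat.div_mul_cancel (Nat.gcd_dvd_left _ _)).symm)

theorem flip_rotation_fixed_words_ternary (n : ℕ) [NeZero n] (l : Fin n) :
    (Odd (n / Nat.gcd n l.val) →
      ∀ w : Fin n → Fin 3, (∀ i : Fin n, w i = 2 - w (i + l)) ↔ w = fun _ => 1) ∧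
    (Even (n / Nat.gcd n l.val) →
      Nat.card {w : Fin n → Fin 3 // ∀ i : Fin n, w i = 2 - w (i + l)} =
        3 ^ Nat.gcd n l.val) := by
  let π : Equiv.Perm (Fin 3) := Equiv.subLeft 2
  have hπ : π ^ 2 = 1 := by decide
  rw [← Fin.addOrderOf_eq_div_gcd]
  refine ⟨fun hodd w => ⟨fun hw => funext fun i => ?_, ?_⟩, fun heven => ?_⟩
  · obtain ⟨k, hk⟩ := hodd
    have hfix := fixedWords.apply_eq_pow_addOrderOf_apply (σ := π) hw i
    rw [hk, pow_succ, pow_mul, hπ, one_pow, one_mul] at hfix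
    exact (by decide : ∀ x : Fin 3, x = π x → x = 1) _ hfix
  · rintro rfl i
    rfl
  · have h : orderOf π ∣ addOrderOf l := (orderOf_dvd_of_pow_eq_one hπ).trans heven.two_dvd
    rw [← Fin.index_zmultiples l]
    exact (card_fixedWords h).trans (by rw [Nat.card_fin])
end
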